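/- Let Ω be a metric space with Borel σ-algebra, Q, P Borel probability measures, α ∈ ℝ \ {0,1}. Then the supremum of the Rényi–Donsker–Varadhan objective over bounded Lipschitz functions equals the supremum over bounded continuous functions. -/

import Mathlib

/-!
Lipschitz functions are continuous, which gives one inequality. Conversely, a bounded continuous
`g` is the pointwise limit of its inf-convolutions `gₙ x = ⨅ y, g y + n * dist x y`, which are
`n`-Lipschitz and bounded by the same constant as `g`; by dominated convergence the exponential
moments of `gₙ`, hence the objective of `gₙ`, converge to those of `g`.
-/

open MeasureTheory Real Filter Topology Set
open scoped NNReal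

section InfConvDist

variable {X : Type*} [PseudoMetricSpace X] {g : X → ℝ} {m C : ℝ}

noncomputable def infConvDist (K : ℝ≥0) (g : X → ℝ) (x : X) : ℝ :=
  ⨅ y, g y + K * dist x y

lemma bddBelow_range_add_mul_dist (hm : ∀ y, m ≤ g y) (K : ℝ≥0) (x : X) :
    BddBelow (range fun y => g y + K * dist x y) := by
  refine ⟨m, ?_⟩
  rintro _ ⟨y, rfl⟩
  exact le_add_of_le_of_nonneg (hm y) (by positivity)

lemma infConvDist_le (hm : ∀ y, m ≤ g y) (K : ℝ≥0) (x : X) : infConvDist K g x ≤ g x :=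
  (ciInf_le (bddBelow_range_add_mul_dist hm K x) x).trans_eq (by simp)

lemma le_infConvDist (hm : ∀ y, m ≤ g y) (K : ℝ≥0) (x : X) : m ≤ infConvDist K g x :=
  have : Nonempty X := ⟨x⟩
  le_ciInf fun y => le_add_of_le_of_nonneg (hm y) (by positivity)

lemma abs_infConvDist_le (hC : ∀ y, |g y| ≤ C) (K : ℝ≥0) (x : X) :
    |infConvDist K g x| ≤ C := by
  have hm : ∀ y, -C ≤ g y := fun y => (abs_le.1 (hC y)).1
  exact abs_le.2 ⟨le_infConvDist hm K x, (infConvDist_le hm K x).trans (abs_le.1 (hC x)).2⟩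

lemma lipschitzWith_infConvDist (hm : ∀ y, m ≤ g y) (K : ℝ≥0) :
    LipschitzWith K (infConvDist K g) := by
  refine LipschitzWith.of_le_add_mul K fun x z => ?_
  have : Nonempty X := ⟨x⟩
  rw [← sub_le_iff_le_add]
  refine le_ciInf fun y => sub_le_iff_le_add.2 ?_
  calc infConvDist K g x ≤ g y + K * dist x y := ciInf_le (bddBelow_range_add_mul_dist hm K x) y
    _ ≤ g y + K * (dist x z + dist z y) := by gcongr; exact dist_triangle x z y
    _ = g y + K * dist z y + K * dist x z := by ring

lemma tendsto_infConvDist (hm : ∀ y, m ≤ g y) {x : X} (hx : ContinuousAt g x) :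
    Tendsto (fun n : ℕ => infConvDist n g x) atTop (𝓝 (g x)) := by
  refine tendsto_order.2 ⟨fun a ha => ?_, fun a ha =>
    Eventually.of_forall fun n => (infConvDist_le hm n x).trans_lt ha⟩
  obtain ⟨b, hab, hb⟩ := exists_between ha
  obtain ⟨δ, hδ, hnear⟩ := Metric.eventually_nhds_iff.1 (hx.eventually (lt_mem_nhds hb))
  have hfar : ∀ᶠ n : ℕ in atTop, b ≤ m + n * δ :=
    (tendsto_atTop_add_const_left _ m
      (tendsto_natCast_atTop_atTop.atTop_mul_const hδ)).eventually_ge_atTop b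
  filter_upwards [hfar] with n hn
  have : Nonempty X := ⟨x⟩
  refine hab.trans_le (le_ciInf fun y => ?_)
  have hn0 : (0 : ℝ) ≤ n := n.cast_nonneg
  push_cast
  rcases lt_or_ge (dist y x) δ with hy | hy
  · exact le_add_of_le_of_nonneg (hnear hy).le (by positivity)
  · rw [dist_comm] at hy
    nlinarith [hm y]

end InfConvDist

section ExpMoments

variable {Ω : Type*} [MeasurableSpace Ω] {μ : Measure Ω} {C : ℝ}

lemma exp_mul_le_exp_abs_mul {t : ℝ} (ht : |t| ≤ C) (c : ℝ) : exp (c * t) ≤ exp (|c| * C) :=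
  exp_le_exp.2 <| (le_abs_self _).trans <| (abs_mul c t).trans_le <|
    mul_le_mul_of_nonneg_left ht (abs_nonneg c)

lemma integrable_exp_mul_of_abs_le [IsFiniteMeasure μ] {f : Ω → ℝ} (hf : Measurable f)
    (hC : ∀ x, |f x| ≤ C) (c : ℝ) : Integrable (fun x => exp (c * f x)) μ :=
  .of_bound (hf.const_mul c).exp.aestronglyMeasurable (exp (|c| * C)) <| .of_forall fun x => by
    rw [norm_of_nonneg (exp_pos _).le]
    exact exp_mul_le_exp_abs_mul (hC x) c

lemma tendsto_integral_exp_mul [IsFiniteMeasure μ] {f : ℕ → Ω → ℝ} {g : Ω → ℝ}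
    (hf : ∀ n, Measurable (f n)) (hC : ∀ n x, |f n x| ≤ C)
    (hlim : ∀ x, Tendsto (fun n => f n x) atTop (𝓝 (g x))) (c : ℝ) :
    Tendsto (fun n => ∫ x, exp (c * f n x) ∂μ) atTop (𝓝 (∫ x, exp (c * g x) ∂μ)) := by
  refine tendsto_integral_of_dominated_convergence (fun _ => exp (|c| * C))
    (fun n => ((hf n).const_mul c).exp.aestronglyMeasurable) (integrable_const _)
    (fun n => .of_forall fun x => ?_) (.of_forall fun x => ?_)
  · rw [norm_of_nonneg (exp_pos _).le]
    exact exp_mul_le_exp_abs_mul (hC n x) c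
  · exact (continuous_exp.tendsto _).comp ((hlim x).const_mul c)

end ExpMoments

section RenyiObjective

variable {Ω : Type*} [MeasurableSpace Ω] {Q P : Measure Ω}

noncomputable def renyiObjective (Q P : Measure Ω) (α : ℝ) (g : Ω → ℝ) : ℝ :=
  (α - 1)⁻¹ * log (∫ x, exp ((α - 1) * g x) ∂Q)
    - α⁻¹ * log (∫ x, exp (α * g x) ∂P)

lemma tendsto_renyiObjective [IsFiniteMeasure Q] [NeZero Q] [IsFiniteMeasure P] [NeZero P]
    {f : ℕ → Ω → ℝ} {g : Ω → ℝ} {C : ℝ} (hf : ∀ n, Measurable (f n))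
    (hg : Measurable g) (hC : ∀ n x, |f n x| ≤ C)
    (hlim : ∀ x, Tendsto (fun n => f n x) atTop (𝓝 (g x))) (α : ℝ) :
    Tendsto (fun n => renyiObjective Q P α (f n)) atTop (𝓝 (renyiObjective Q P α g)) := by
  have hgC : ∀ x, |g x| ≤ C := fun x =>
    le_of_tendsto' ((continuous_abs.tendsto _).comp (hlim x)) fun n => hC n x
  have hlog : ∀ (μ : Measure Ω) [IsFiniteMeasure μ] [NeZero μ] (c : ℝ),
      Tendsto (fun n => log (∫ x, exp (c * f n x) ∂μ)) atTop
        (𝓝 (log (∫ x, exp (c * g x) ∂μ))) := fun μ _ _ c =>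
    ((continuousAt_log (integral_exp_pos (integrable_exp_mul_of_abs_le hg hgC c)).ne').tendsto).comp
      (tendsto_integral_exp_mul hf hC hlim c)
  exact ((hlog Q (α - 1)).const_mul _).sub ((hlog P α).const_mul _)

end RenyiObjective

theorem renyi_sup_lipschitz_eq_sup_continuous_general {Ω : Type*} [MetricSpace Ω]
    [MeasurableSpace Ω] [BorelSpace Ω]
    (Q P : Measure Ω) [IsProbabilityMeasure Q] [IsProbabilityMeasure P]
    {α : ℝ} :
    sSup {r : EReal | ∃ g : Ω → ℝ, (∃ L : ℝ≥0, LipschitzWith L g) ∧ (∃ C, ∀ x, |g x| ≤ C) ∧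
        r = (((α - 1)⁻¹ * Real.log (∫ x, Real.exp ((α - 1) * g x) ∂Q)
              - α⁻¹ * Real.log (∫ x, Real.exp (α * g x) ∂P) : ℝ) : EReal)}
      = sSup {r : EReal | ∃ g : Ω → ℝ, Continuous g ∧ (∃ C, ∀ x, |g x| ≤ C) ∧
        r = (((α - 1)⁻¹ * Real.log (∫ x, Real.exp ((α - 1) * g x) ∂Q)
              - α⁻¹ * Real.log (∫ x, Real.exp (α * g x) ∂P) : ℝ) : EReal)} := by
  apply le_antisymm
  · refine sSup_le_sSup ?_
    rintro _ ⟨g, ⟨L, hL⟩, hbdd, rfl⟩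
    exact ⟨g, hL.continuous, hbdd, rfl⟩
  · refine sSup_le ?_
    rintro _ ⟨g, hg, ⟨C, hC⟩, rfl⟩
    have hm : ∀ x, -C ≤ g x := fun x => (abs_le.1 (hC x)).1
    have hlim : Tendsto (fun n : ℕ => (renyiObjective Q P α (infConvDist n g) : EReal)) atTop
        (𝓝 (renyiObjective Q P α g)) :=
      EReal.tendsto_coe.2 <| tendsto_renyiObjective
        (fun n => (lipschitzWith_infConvDist hm n).continuous.measurable) hg.measurable
        (fun n => abs_infConvDist_le hC n) (fun x => tendsto_infConvDist hm hg.continuousAt) α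
    exact le_of_tendsto' hlim fun n =>
      le_sSup ⟨infConvDist n g, ⟨n, lipschitzWith_infConvDist hm n⟩,
        ⟨C, abs_infConvDist_le hC n⟩, rfl⟩

/-- On a metric space with its Borel σ-algebra, the supremum of the
Rényi–Donsker–Varadhan objective over bounded Lipschitz functions equals the supremum
over bounded continuous functions. -/
theorem renyi_sup_lipschitz_eq_sup_continuous {Ω : Type*} [MetricSpace Ω]
    [MeasurableSpace Ω] [BorelSpace Ω]
    (Q P : Measure Ω) [IsProbabilityMeasure Q] [IsProbabilityMeasure P]
    {α : ℝ} (hα0 : α ≠ 0) (hα1 : α ≠ 1) :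
    sSup {r : EReal | ∃ g : Ω → ℝ, (∃ L : ℝ≥0, LipschitzWith L g) ∧ (∃ C, ∀ x, |g x| ≤ C) ∧
        r = (((α - 1)⁻¹ * Real.log (∫ x, Real.exp ((α - 1) * g x) ∂Q)
              - α⁻¹ * Real.log (∫ x, Real.exp (α * g x) ∂P) : ℝ) : EReal)}
      = sSup {r : EReal | ∃ g : Ω → ℝ, Continuous g ∧ (∃ C, ∀ x, |g x| ≤ C) ∧
        r = (((α - 1)⁻¹ * Real.log (∫ x, Real.exp ((α - 1) * g x) ∂Q)
              - α⁻¹ * Real.log (∫ x, Real.exp (α * g x) ∂P) : ℝ) : EReal)} :=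
  renyi_sup_lipschitz_eq_sup_continuous_general Q P
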